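/- arXiv:1204.4953 — 2 statements merged into one kernel-verified Lean document; each statement's English description precedes it below -/
import Mathlib

section
/- Let P be a point of PG(2,q^3) such that the three points P, P^q and P^{q^2} (the images of P under the Frobenius collineation and its square) are not collinear. Then the line of PG(2,q^3) joining P and P^q contains no F-rational point. -/
open scoped LinearAlgebra.Projectivization

/-- A point of `PG(2,K)` is `F`-rational if it has a representative vector all of whose
coordinates lie in the image of `F` in `K`. -/
def IsRationalPoint (F K : Type*) [Field F] [Field K] [Algebra F K]
    (x : ℙ K (Fin 3 → K)) : Prop :=
  ∃ v : Fin 3 → K, (∀ i, v i ∈ Set.range (algebraMap F K)) ∧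
    ∃ h : v ≠ 0, x = Projectivization.mk K v h

/-- The lines of `PG(2,K)` are the projectivizations of the 2-dimensional `K`-subspaces
of `K^3`; this is the set of points of the line corresponding to such a subspace `W`. -/
def linePoints (K : Type*) [Field K] (W : Submodule K (Fin 3 → K)) :
    Set (ℙ K (Fin 3 → K)) :=
  {x | x.submodule ≤ W}

/-- Three points of `PG(2,K)` are collinear if they lie on a common line. -/
def Collinear3 (K : Type*) [Field K] (x y z : ℙ K (Fin 3 → K)) : Prop :=
  ∃ W : Submodule K (Fin 3 → K), Module.finrank K W = 2 ∧
    x ∈ linePoints K W ∧ y ∈ linePoints K W ∧ z ∈ linePoints K W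

/-!
Let `Φ` be the coordinatewise Frobenius, a semilinear map fixing every rational vector `w`.
If `v` and `Φ v` span the line `W` and `w = a v + b Φ v` lies on it, then applying `Φ` gives
`w = a^q Φ v + b^q Φ² v`. For `b ≠ 0` this puts `Φ² v` on `W`, i.e. `P`, `P^q`, `P^{q²}` are
collinear; for `b = 0` both `v` and `Φ v` are multiples of `w`, and again `Φ² v ∈ W`.
-/

open Module Submodule

@[simps]
def RingHom.compLeftₛₗ {K : Type*} [Semiring K] (σ : K →+* K) (ι : Type*) :
    (ι → K) →ₛₗ[σ] (ι → K) where
  toFun u i := σ (u i)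
  map_add' _ _ := funext fun _ => map_add σ _ _
  map_smul' _ _ := funext fun _ => map_mul σ _ _

theorem AlgHom.compLeftₛₗ_apply_eq_self {F K ι : Type*} [CommSemiring F] [Semiring K]
    [Algebra F K] (σ : K →ₐ[F] K) {w : ι → K} (hw : ∀ i, w i ∈ Set.range (algebraMap F K)) :
    (σ : K →+* K).compLeftₛₗ ι w = w := by
  funext i
  obtain ⟨a, ha⟩ := hw i
  simp [← ha]

section Semilinear

variable {K V : Type*} [Field K] [AddCommGroup V] [Module K V] {σ : K →+* K}

theorem apply_apply_mem_span_singleton (Φ : V →ₛₗ[σ] V) {u : V} (hu : Φ u ∈ K ∙ u) :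
    Φ (Φ u) ∈ K ∙ Φ u := by
  obtain ⟨c, hc⟩ := mem_span_singleton.mp hu
  rw [← hc, map_smulₛₗ, hc]
  exact smul_mem _ _ (mem_span_singleton_self _)

theorem span_pair_eq_of_finrank_eq_two {W : Submodule K V} (hW : finrank K W = 2) {x y : V}
    (hx : x ∈ W) (hy : y ∈ W) (hxy : LinearIndependent K ![x, y]) :
    span K {x, y} = W := by
  have : FiniteDimensional K W := Module.finite_of_finrank_pos (by omega)
  refine eq_of_le_of_finrank_eq (span_le.mpr (Set.insert_subset hx (by simpa using hy))) ?_
  rw [hW, ← Matrix.range_cons_cons_empty, finrank_span_eq_card hxy, Fintype.card_fin]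

theorem eq_zero_of_apply_eq_self_of_mem (Φ : V →ₛₗ[σ] V) {W : Submodule K V}
    (hW : finrank K W = 2) {v w : V} (hv : v ∈ W) (hΦv : Φ v ∈ W) (hΦΦv : Φ (Φ v) ∉ W)
    (hw : w ∈ W) (hΦw : Φ w = w) : w = 0 := by
  have hv_span : Φ v ∉ K ∙ v := fun h =>
    hΦΦv (span_singleton_le_iff_mem _ _ |>.mpr hΦv (apply_apply_mem_span_singleton Φ h))
  have hv0 : v ≠ 0 := by rintro rfl; simp at hΦΦv
  have hind : LinearIndependent K ![v, Φ v] :=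
    (LinearIndependent.pair_iff' hv0).mpr fun c hc =>
      hv_span (hc ▸ smul_mem _ c (mem_span_singleton_self v))
  rw [← span_pair_eq_of_finrank_eq_two hW hv hΦv hind, mem_span_pair] at hw
  obtain ⟨a, b, rfl⟩ := hw
  have hΦw' : σ a • Φ v + σ b • Φ (Φ v) = a • v + b • Φ v := by
    rw [← hΦw, map_add, map_smulₛₗ, map_smulₛₗ]
  by_contra hw0
  by_cases hb : b = 0
  · subst hb
    simp only [map_zero, zero_smul, add_zero] at hΦw' hw0
    have hσa : σ a ≠ 0 := fun h => hw0 (by rw [← hΦw', h, zero_smul])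
    exact hv_span ((smul_mem_iff _ hσa).mp (hΦw' ▸ smul_mem _ a (mem_span_singleton_self v)))
  · refine hΦΦv ((smul_mem_iff _ ((map_ne_zero σ).mpr hb)).mp ?_)
    rw [eq_sub_of_add_eq' hΦw']
    exact sub_mem (add_mem (smul_mem _ _ hv) (smul_mem _ _ hΦv)) (smul_mem _ _ hΦv)

end Semilinear

theorem mk_mem_linePoints_iff {K : Type*} [Field K] {W : Submodule K (Fin 3 → K)}
    {u : Fin 3 → K} (hu : u ≠ 0) : Projectivization.mk K u hu ∈ linePoints K W ↔ u ∈ W := by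
  simp [linePoints, Projectivization.submodule_mk, span_singleton_le_iff_mem]

theorem conjugate_line_no_rational_point_general (q : ℕ) (F K : Type*) [Field F] [Field K]
    [Algebra F K] [Fintype F]
    (hF : Fintype.card F = q)
    (v : Fin 3 → K) (hv : v ≠ 0)
    (hvq : (fun i => v i ^ q) ≠ 0) (hvq2 : (fun i => v i ^ q ^ 2) ≠ 0)
    (hnc : ¬ Collinear3 K (Projectivization.mk K v hv)
      (Projectivization.mk K (fun i => v i ^ q) hvq)
      (Projectivization.mk K (fun i => v i ^ q ^ 2) hvq2))
    (W : Submodule K (Fin 3 → K)) (hW : Module.finrank K W = 2)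
    (hP : Projectivization.mk K v hv ∈ linePoints K W)
    (hPq : Projectivization.mk K (fun i => v i ^ q) hvq ∈ linePoints K W) :
    ∀ x : ℙ K (Fin 3 → K), IsRationalPoint F K x → x ∉ linePoints K W := by
  rintro x ⟨w, hw, hw0, rfl⟩ hxW
  subst hF
  let Φ := ((FiniteField.frobeniusAlgHom F K : K →ₐ[F] K) : K →+* K).compLeftₛₗ (Fin 3)
  have hΦv : Φ v = fun i => v i ^ Fintype.card F := rfl
  have hΦΦv : Φ (Φ v) = fun i => v i ^ Fintype.card F ^ 2 := by
    funext i
    simp [Φ, ← pow_mul, sq]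
  have hΦΦv_notMem : Φ (Φ v) ∉ W := fun h =>
    hnc ⟨W, hW, hP, hPq, (mk_mem_linePoints_iff hvq2).mpr (hΦΦv ▸ h)⟩
  rw [mk_mem_linePoints_iff] at hP hPq hxW
  exact hw0 (eq_zero_of_apply_eq_self_of_mem Φ hW hP (hΦv ▸ hPq) hΦΦv_notMem hxW
    (AlgHom.compLeftₛₗ_apply_eq_self _ hw))

/-- Let `P` be a point of `PG(2,q^3)` (with representative vector `v`) such that `P`, `P^q`
and `P^{q^2}` (its images under the Frobenius collineation `x ↦ x^q` applied
coordinatewise, and its square) are not collinear. Then the line of `PG(2,q^3)` joining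
`P` and `P^q` contains no `F`-rational point. -/
theorem conjugate_line_no_rational_point (q : ℕ) (F K : Type*) [Field F] [Field K]
    [Algebra F K] [Fintype F] [Fintype K]
    (hF : Fintype.card F = q) (hK : Fintype.card K = q ^ 3)
    (v : Fin 3 → K) (hv : v ≠ 0)
    (hvq : (fun i => v i ^ q) ≠ 0) (hvq2 : (fun i => v i ^ q ^ 2) ≠ 0)
    (hnc : ¬ Collinear3 K (Projectivization.mk K v hv)
      (Projectivization.mk K (fun i => v i ^ q) hvq)
      (Projectivization.mk K (fun i => v i ^ q ^ 2) hvq2))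
    (W : Submodule K (Fin 3 → K)) (hW : Module.finrank K W = 2)
    (hP : Projectivization.mk K v hv ∈ linePoints K W)
    (hPq : Projectivization.mk K (fun i => v i ^ q) hvq ∈ linePoints K W) :
    ∀ x : ℙ K (Fin 3 → K), IsRationalPoint F K x → x ∉ linePoints K W :=
  conjugate_line_no_rational_point_general q F K hF v hv hvq hvq2 hnc W hW hP hPq
end

section
/- Let P be a point of PG(2,q^3) such that P, P^q and P^{q^2} are not collinear. Then for any two distinct F-rational points A and B of PG(2,q^3), there exists a quadratic form Q on F^3, unique up to multiplication by a nonzero scalar of F, such that the base change of Q to K vanishes on representative vectors of each of the five points A, B, P, P^q, P^{q^2}; moreover, the zero locus in PG(2,K) of the base change of Q contains no three collinear points (so the conic determined by Q is non-degenerate). -/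
open scoped LinearAlgebra.Projectivization

/-- The value at `v : K^3` of the base change to `K` of a quadratic form `Q` on `F^3`:
writing `v = ∑ vᵢ eᵢ` in the standard basis, the base-changed form is
`∑ᵢ vᵢ² Q(eᵢ) + ∑_{i<j} vᵢ vⱼ polar(Q)(eᵢ,eⱼ)`, with the coefficients mapped into `K`. -/
def evalBaseChange (F K : Type*) [Field F] [Field K] [Algebra F K]
    (Q : QuadraticForm F (Fin 3 → F)) (v : Fin 3 → K) : K :=
  (∑ i, v i ^ 2 * algebraMap F K (Q (Pi.single i 1))) +
    ∑ i, ∑ j, if i < j then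
      v i * v j * algebraMap F K (QuadraticMap.polar Q (Pi.single i 1) (Pi.single j 1))
    else 0

/-- The base change of `Q` to `K` vanishes at the point `x` of `PG(2,K)`, i.e. it vanishes
at every representative vector of `x`. -/
def VanishesAt (F K : Type*) [Field F] [Field K] [Algebra F K]
    (Q : QuadraticForm F (Fin 3 → F)) (x : ℙ K (Fin 3 → K)) : Prop :=
  ∀ (v : Fin 3 → K) (h : v ≠ 0), x = Projectivization.mk K v h → evalBaseChange F K Q v = 0

/-- The zero locus in `PG(2,K)` of the base change to `K` of a quadratic form on `F^3`:
the set of points all of whose representative vectors are zeros of the form. -/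
def zeroLocus (F K : Type*) [Field F] [Field K] [Algebra F K]
    (Q : QuadraticForm F (Fin 3 → F)) : Set (ℙ K (Fin 3 → K)) :=
  {x | VanishesAt F K Q x}

/-!
Conics over `F` form a `6`-dimensional space. Vanishing at the rational points `A`, `B` is one
`F`-linear condition each and vanishing at `P` is one `K`-linear, i.e. three `F`-linear,
condition, so a nonzero `Q` exists; its coefficients are fixed by the Frobenius `σ : t ↦ t^q`,
so it also vanishes at `P^q` and `P^{q^2}`.

The five points are in general position. A line through `A`, `B` is `σ`-stable, so if it
contained one conjugate of `P` it would contain all three. A line through a rational point and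
two conjugates of `P` is a side of the triangle `P P^q P^{q^2}`; applying `σ`, the rational point
lies on all three sides, which is impossible (Cramer's rule).

A conic vanishing at three distinct collinear points vanishes on their line `f = 0`, hence
factors as `f · g`, and two lines cannot carry five points in general position. This gives
non-degeneracy. For uniqueness, a suitable combination of two conics through the five points
also vanishes at a third point of the line through two of them, so it is zero.
-/

open Matrix Module

namespace QuadraticMap

variable {K V : Type*} [Field K] [AddCommGroup V] [Module K V]

lemma map_smul_add_smul (Q : QuadraticMap K V K) (a b : K) (x y : V) :
    Q (a • x + b • y) = a ^ 2 * Q x + b ^ 2 * Q y + a * b * polar Q x y := by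
  rw [QuadraticMap.map_add Q, Q.map_smul, Q.map_smul, polar_smul_left, polar_smul_right]
  simp only [smul_eq_mul]
  ring

lemma map_smul_add_smul_eq_zero {Q : QuadraticMap K V K} {x y : V} {s t : K}
    (hs : s ≠ 0) (ht : t ≠ 0) (hx : Q x = 0) (hy : Q y = 0) (hz : Q (s • x + t • y) = 0)
    (a b : K) : Q (a • x + b • y) = 0 := by
  have hpolar : polar Q x y = 0 := by
    rw [map_smul_add_smul, hx, hy] at hz
    simpa [hs, ht] using hz
  rw [map_smul_add_smul, hx, hy, hpolar]
  ring

lemma exists_eq_mul_of_ker {Q : QuadraticMap K V K} {f : Dual K V} (hf : f ≠ 0)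
    (hQ : ∀ x, f x = 0 → Q x = 0) : ∃ g : Dual K V, ∀ x, Q x = f x * g x := by
  obtain ⟨y, hy⟩ : ∃ y, f y = 1 := by
    obtain ⟨y, hy⟩ := DFunLike.ne_iff.mp hf
    exact ⟨(f y)⁻¹ • y, by simp [inv_mul_cancel₀ hy]⟩
  -- expanding `Q (x - f x • y) = 0` gives `Q x = f x * (polar Q x y - f x * Q y)`
  refine ⟨(polarBilin Q).flip y - Q y • f, fun x => ?_⟩
  have h := hQ (x - f x • y) (by simp [hy])
  rw [sub_eq_add_neg, ← neg_smul, ← one_smul K x, map_smul_add_smul] at h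
  simp only [one_smul, LinearMap.sub_apply, LinearMap.flip_apply, polarBilin_apply_apply,
    LinearMap.smul_apply, smul_eq_mul] at h ⊢
  linear_combination h

end QuadraticMap

lemma finrank_span_pair {K V : Type*} [Field K] [AddCommGroup V] [Module K V] {x y : V}
    (h : LinearIndependent K ![x, y]) : finrank K (Submodule.span K {x, y}) = 2 := by
  rw [← Matrix.range_cons_cons_empty x y ![], finrank_span_eq_card h, Fintype.card_fin]

section ProjectivePlane

variable {K : Type*} [Field K]

lemma finrank_ker_dual_eq_two {f : Dual K (Fin 3 → K)} (hf : f ≠ 0) :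
    finrank K (LinearMap.ker f) = 2 := by
  have h := Dual.finrank_ker_add_one_of_ne_zero hf
  rw [finrank_fin_fun] at h
  omega

lemma exists_dual_ker_eq {W : Submodule K (Fin 3 → K)} (hW : finrank K W = 2) :
    ∃ f : Dual K (Fin 3 → K), f ≠ 0 ∧ LinearMap.ker f = W := by
  obtain ⟨f, hf, hWf⟩ := W.exists_le_ker_of_lt_top
    (Submodule.lt_top_of_finrank_lt_finrank (by rw [hW, finrank_fin_fun]; norm_num))
  exact ⟨f, hf, (Submodule.eq_of_le_of_finrank_eq hWf
    (by rw [hW, finrank_ker_dual_eq_two hf])).symm⟩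

lemma det_eq_cross_dotProduct (x y z : Fin 3 → K) : det ![x, y, z] = x ⨯₃ y ⬝ᵥ z := by
  rw [← triple_product_eq_det, triple_product_permutation, triple_product_permutation,
    dotProduct_comm]

lemma det_eq_zero_of_not_linearIndependent_pair {x y : Fin 3 → K}
    (h : ¬LinearIndependent K ![x, y]) (z : Fin 3 → K) : det ![x, y, z] = 0 := by
  rw [← crossProduct_ne_zero_iff_linearIndependent, not_not] at h
  rw [det_eq_cross_dotProduct, h, zero_dotProduct]

lemma exists_dual_ne_zero_of_det_eq_zero {x y z : Fin 3 → K} (h : det ![x, y, z] = 0) :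
    ∃ f : Dual K (Fin 3 → K), f ≠ 0 ∧ f x = 0 ∧ f y = 0 ∧ f z = 0 := by
  obtain ⟨u, hu, hxyz⟩ := exists_mulVec_eq_zero_iff.mpr h
  refine ⟨dotProductEquiv K (Fin 3) u, by simpa using hu, ?_, ?_, ?_⟩
  · simpa [mulVec, dotProduct_comm] using congrFun hxyz 0
  · simpa [mulVec, dotProduct_comm] using congrFun hxyz 1
  · simpa [mulVec, dotProduct_comm] using congrFun hxyz 2

lemma det_eq_zero_of_dual {f : Dual K (Fin 3 → K)} (hf : f ≠ 0) {x y z : Fin 3 → K}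
    (hx : f x = 0) (hy : f y = 0) (hz : f z = 0) : det ![x, y, z] = 0 := by
  set u := (dotProductEquiv K (Fin 3)).symm f
  have hfu : ∀ w, f w = u ⬝ᵥ w := fun w => by
    rw [← dotProductEquiv_apply_apply, LinearEquiv.apply_symm_apply]
  refine exists_mulVec_eq_zero_iff.mp ⟨u, by simpa [u] using hf, ?_⟩
  ext i
  fin_cases i <;> simp [mulVec, dotProduct_comm _ u, ← hfu, hx, hy, hz]

lemma collinear3_mk_of_dual {f : Dual K (Fin 3 → K)} (hf : f ≠ 0) {x y z : Fin 3 → K}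
    (hx : x ≠ 0) (hy : y ≠ 0) (hz : z ≠ 0) (hfx : f x = 0) (hfy : f y = 0) (hfz : f z = 0) :
    Collinear3 K (.mk K x hx) (.mk K y hy) (.mk K z hz) := by
  refine ⟨LinearMap.ker f, finrank_ker_dual_eq_two hf, ?_, ?_, ?_⟩ <;>
    simp [linePoints, Projectivization.submodule_mk, Submodule.span_singleton_le_iff_mem, *]

lemma Collinear3.exists_rep_eq_smul_add_smul {x y z : ℙ K (Fin 3 → K)} (h : Collinear3 K x y z)
    (hxy : x ≠ y) (hxz : x ≠ z) (hyz : y ≠ z) :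
    LinearIndependent K ![x.rep, y.rep] ∧
      ∃ s t : K, s ≠ 0 ∧ t ≠ 0 ∧ z.rep = s • x.rep + t • y.rep := by
  obtain ⟨W, hW, hxW, hyW, hzW⟩ := h
  simp only [linePoints, Set.mem_ofPred_eq, Projectivization.submodule_eq,
    Submodule.span_singleton_le_iff_mem] at hxW hyW hzW
  have hind : LinearIndependent K ![x.rep, y.rep] := by
    rw [← Projectivization.independent_mk_iff_LinearIndependent x.rep_nonzero y.rep_nonzero]
    simpa using hxy
  have hspan : Submodule.span K {x.rep, y.rep} = W := Submodule.eq_of_le_of_finrank_eq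
    ((Submodule.span_le).mpr (by simp [Set.insert_subset_iff, hxW, hyW]))
    (by rw [finrank_span_pair hind, hW])
  obtain ⟨s, t, hst⟩ := Submodule.mem_span_pair.mp (hspan ▸ hzW)
  refine ⟨hind, s, t, ?_, ?_, hst.symm⟩ <;> rintro rfl
  · apply hyz
    rw [← y.mk_rep, ← z.mk_rep, eq_comm, Projectivization.mk_eq_mk_iff']
    exact ⟨t, by simpa using hst⟩
  · apply hxz
    rw [← x.mk_rep, ← z.mk_rep, eq_comm, Projectivization.mk_eq_mk_iff']
    exact ⟨s, by simpa using hst⟩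

/-- Lines of `PG(2,K)` are the kernels of nonzero functionals; none contains three of the
points `p i`. -/
def InGeneralPosition {ι : Type*} (p : ι → Fin 3 → K) : Prop :=
  ∀ f : Dual K (Fin 3 → K), f ≠ 0 → {i | f (p i) = 0}.ncard ≤ 2

namespace InGeneralPosition

variable {ι : Type*} {p : ι → Fin 3 → K}

lemma eq_or_eq_or_eq [Finite ι] (hp : InGeneralPosition p) {f : Dual K (Fin 3 → K)}
    (hf : f ≠ 0) {i j k : ι} (hi : f (p i) = 0) (hj : f (p j) = 0) (hk : f (p k) = 0) :
    i = j ∨ i = k ∨ j = k := by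
  by_contra! h
  exact (hp f hf).not_gt
    ((Set.two_lt_ncard_iff (Set.toFinite _)).mpr ⟨i, j, k, hi, hj, hk, h.1, h.2.1, h.2.2⟩)

lemma linearIndependent_pair [Finite ι] (hp : InGeneralPosition p) {i j k : ι} (hij : i ≠ j)
    (hik : i ≠ k) (hjk : j ≠ k) : LinearIndependent K ![p i, p j] := by
  by_contra h
  obtain ⟨f, hf, hi, hj, hk⟩ :=
    exists_dual_ne_zero_of_det_eq_zero (det_eq_zero_of_not_linearIndependent_pair h (p k))
  simpa [hij, hik, hjk] using hp.eq_or_eq_or_eq hf hi hj hk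

lemma exists_apply_ne_zero (hp : InGeneralPosition p) (hι : 4 < Nat.card ι)
    {f g : Dual K (Fin 3 → K)} (hf : f ≠ 0) (hg : g ≠ 0) : ∃ i, f (p i) ≠ 0 ∧ g (p i) ≠ 0 := by
  by_contra! h
  have hcover : Set.univ = {i | f (p i) = 0} ∪ {i | g (p i) = 0} := by
    ext i
    simpa [or_iff_not_imp_left] using h i
  have := Set.ncard_union_le {i | f (p i) = 0} {i | g (p i) = 0}
  rw [← hcover, Set.ncard_univ] at this
  linarith [hp f hf, hp g hg]

end InGeneralPosition

namespace QuadraticMap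

variable {ι : Type*} {p : ι → Fin 3 → K}

lemma eq_zero_of_inGeneralPosition (hp : InGeneralPosition p) (hι : 4 < Nat.card ι)
    {Q : QuadraticMap K (Fin 3 → K) K} (hQp : ∀ i, Q (p i) = 0)
    {W : Submodule K (Fin 3 → K)} (hW : finrank K W = 2) (hQW : ∀ w ∈ W, Q w = 0) : Q = 0 := by
  obtain ⟨f, hf, rfl⟩ := exists_dual_ker_eq hW
  obtain ⟨g, hQ⟩ := exists_eq_mul_of_ker hf hQW
  by_contra hQ0
  have hg : g ≠ 0 := by
    rintro rfl
    exact hQ0 (QuadraticMap.ext fun x => by simp [hQ])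
  obtain ⟨i, hfi, hgi⟩ := hp.exists_apply_ne_zero hι hf hg
  exact mul_ne_zero hfi hgi ((hQ (p i)).symm.trans (hQp i))

lemma eq_zero_of_inGeneralPosition_of_smul_add_smul (hp : InGeneralPosition p)
    (hι : 4 < Nat.card ι) {Q : QuadraticMap K (Fin 3 → K) K} (hQp : ∀ i, Q (p i) = 0)
    {x y : Fin 3 → K} (hxy : LinearIndependent K ![x, y]) {s t : K} (hs : s ≠ 0) (ht : t ≠ 0)
    (hx : Q x = 0) (hy : Q y = 0) (hz : Q (s • x + t • y) = 0) : Q = 0 := by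
  refine eq_zero_of_inGeneralPosition hp hι hQp (finrank_span_pair hxy) fun w hw => ?_
  obtain ⟨a, b, rfl⟩ := Submodule.mem_span_pair.mp hw
  exact map_smul_add_smul_eq_zero hs ht hx hy hz a b

lemma eq_zero_of_collinear3 (hp : InGeneralPosition p) (hι : 4 < Nat.card ι)
    {Q : QuadraticMap K (Fin 3 → K) K} (hQp : ∀ i, Q (p i) = 0) {x y z : ℙ K (Fin 3 → K)}
    (hxyz : Collinear3 K x y z) (hxy : x ≠ y) (hxz : x ≠ z) (hyz : y ≠ z)
    (hx : Q x.rep = 0) (hy : Q y.rep = 0) (hz : Q z.rep = 0) : Q = 0 := by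
  obtain ⟨hind, s, t, hs, ht, hzst⟩ := hxyz.exists_rep_eq_smul_add_smul hxy hxz hyz
  rw [hzst] at hz
  exact eq_zero_of_inGeneralPosition_of_smul_add_smul hp hι hQp hind hs ht hx hy hz

lemma exists_eq_smul_of_inGeneralPosition [Finite ι] (hp : InGeneralPosition p)
    (hι : 4 < Nat.card ι) {Q Q' : QuadraticMap K (Fin 3 → K) K} (hQ : Q ≠ 0)
    (hQp : ∀ i, Q (p i) = 0) (hQ'p : ∀ i, Q' (p i) = 0) : ∃ c : K, Q' = c • Q := by
  obtain ⟨i, j, k, -, -, -, hij, hik, hjk⟩ := (Set.two_lt_ncard_iff (Set.toFinite _)).mp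
    (show 2 < (Set.univ : Set ι).ncard by rw [Set.ncard_univ]; omega)
  have hxy := hp.linearIndependent_pair hij hik hjk
  have hQz : Q (p i + p j) ≠ 0 := fun hz =>
    hQ (eq_zero_of_inGeneralPosition_of_smul_add_smul hp hι hQp hxy one_ne_zero one_ne_zero
      (hQp i) (hQp j) (by simpa using hz))
  refine ⟨Q' (p i + p j) / Q (p i + p j), sub_eq_zero.mp ?_⟩
  refine eq_zero_of_inGeneralPosition_of_smul_add_smul hp hι (fun l => ?_) hxy one_ne_zero
    one_ne_zero ?_ ?_ ?_ <;> simp [hQp, hQ'p, hQz]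

end QuadraticMap

lemma det_cycle (x y z : Fin 3 → K) : det ![y, z, x] = det ![x, y, z] := by
  rw [← triple_product_eq_det, ← triple_product_eq_det, triple_product_permutation,
    triple_product_permutation]

lemma RingHom.map_det_fin_three (σ : K →+* K) (x y z : Fin 3 → K) :
    σ (det ![x, y, z]) = det ![σ ∘ x, σ ∘ y, σ ∘ z] := by
  rw [σ.map_det ![x, y, z]]
  congr 1
  ext i j
  fin_cases i <;> rfl

lemma eq_zero_of_det_sides_eq_zero {r x y z : Fin 3 → K} (h : det ![x, y, z] ≠ 0)
    (hxy : det ![r, x, y] = 0) (hyz : det ![r, y, z] = 0) (hzx : det ![r, z, x] = 0) :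
    r = 0 := by
  have cramer : det ![x, y, z] • r =
      det ![r, y, z] • x + det ![r, z, x] • y + det ![r, x, y] • z := by
    ext i
    fin_cases i <;>
      simp [det_eq_cross_dotProduct, cross_apply, dotProduct, Fin.sum_univ_three] <;> ring
  rw [hxy, hyz, hzx] at cramer
  simpa [h] using cramer

structure IsCyclicTriangle (σ : K →+* K) (x y z : Fin 3 → K) : Prop where
  map_fst : σ ∘ x = y
  map_snd : σ ∘ y = z
  map_thd : σ ∘ z = x
  det_ne_zero : det ![x, y, z] ≠ 0

namespace IsCyclicTriangle

variable {σ : K →+* K} {x y z : Fin 3 → K}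

lemma rotate (h : IsCyclicTriangle σ x y z) : IsCyclicTriangle σ y z x :=
  ⟨h.map_snd, h.map_thd, h.map_fst, by rw [det_cycle]; exact h.det_ne_zero⟩

lemma det_fixed_ne_zero (h : IsCyclicTriangle σ x y z) {r : Fin 3 → K} (hr : σ ∘ r = r)
    (hr0 : r ≠ 0) : det ![r, x, y] ≠ 0 := by
  intro hxy
  have hyz : det ![r, y, z] = 0 := by
    rw [← hr, ← h.map_fst, ← h.map_snd, ← RingHom.map_det_fin_three, hxy, map_zero]
  have hzx : det ![r, z, x] = 0 := by
    rw [← hr, ← h.map_snd, ← h.map_thd, ← RingHom.map_det_fin_three, hyz, map_zero]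
  exact hr0 (eq_zero_of_det_sides_eq_zero h.det_ne_zero hxy hyz hzx)

lemma det_fixed_fixed_ne_zero (h : IsCyclicTriangle σ x y z) {a b : Fin 3 → K}
    (ha : σ ∘ a = a) (hb : σ ∘ b = b) (hab : LinearIndependent K ![a, b]) :
    det ![a, b, x] ≠ 0 := by
  intro hx
  have hy : det ![a, b, y] = 0 := by
    rw [← ha, ← hb, ← h.map_fst, ← RingHom.map_det_fin_three, hx, map_zero]
  have hz : det ![a, b, z] = 0 := by
    rw [← ha, ← hb, ← h.map_snd, ← RingHom.map_det_fin_three, hy, map_zero]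
  refine h.det_ne_zero (det_eq_zero_of_dual (f := dotProductEquiv K (Fin 3) (a ⨯₃ b)) ?_ ?_ ?_ ?_)
  · simpa [crossProduct_ne_zero_iff_linearIndependent] using hab
  · simpa [det_eq_cross_dotProduct] using hx
  · simpa [det_eq_cross_dotProduct] using hy
  · simpa [det_eq_cross_dotProduct] using hz

lemma inGeneralPosition (h : IsCyclicTriangle σ x y z) {a b : Fin 3 → K} (ha : σ ∘ a = a)
    (hb : σ ∘ b = b) (hab : LinearIndependent K ![a, b]) :
    InGeneralPosition ![a, b, x, y, z] := by
  intro f hf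
  by_contra! hcard
  obtain ⟨i, j, k, hi, hj, hk, hij, hik, hjk⟩ :=
    (Set.two_lt_ncard_iff (Set.toFinite _)).mp hcard
  have not_on_line : ∀ {u v w : Fin 3 → K}, det ![u, v, w] ≠ 0 →
      f u = 0 → f v = 0 → f w = 0 → False :=
    fun huvw hu hv hw => huvw (det_eq_zero_of_dual hf hu hv hw)
  have ha0 : a ≠ 0 := by simpa using hab.ne_zero 0
  have hb0 : b ≠ 0 := by simpa using hab.ne_zero 1
  have hxyz := not_on_line h.det_ne_zero
  have habx := not_on_line (h.det_fixed_fixed_ne_zero ha hb hab)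
  have haby := not_on_line (h.rotate.det_fixed_fixed_ne_zero ha hb hab)
  have habz := not_on_line (h.rotate.rotate.det_fixed_fixed_ne_zero ha hb hab)
  have haxy := not_on_line (h.det_fixed_ne_zero ha ha0)
  have hayz := not_on_line (h.rotate.det_fixed_ne_zero ha ha0)
  have hazx := not_on_line (h.rotate.rotate.det_fixed_ne_zero ha ha0)
  have hbxy := not_on_line (h.det_fixed_ne_zero hb hb0)
  have hbyz := not_on_line (h.rotate.det_fixed_ne_zero hb hb0)
  have hbzx := not_on_line (h.rotate.rotate.det_fixed_ne_zero hb hb0)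
  simp only [Set.mem_ofPred_eq] at hi hj hk
  fin_cases i <;> fin_cases j <;> fin_cases k <;>
    simp only [Fin.zero_eta, Fin.mk_one, Fin.reduceFinMk, Matrix.cons_val] at hi hj hk <;>
    first
      | exact (hij rfl).elim | exact (hik rfl).elim | exact (hjk rfl).elim
      | exact hxyz ‹_› ‹_› ‹_› | exact habx ‹_› ‹_› ‹_› | exact haby ‹_› ‹_› ‹_›
      | exact habz ‹_› ‹_› ‹_› | exact haxy ‹_› ‹_› ‹_› | exact hayz ‹_› ‹_› ‹_›
      | exact hazx ‹_› ‹_› ‹_› | exact hbxy ‹_› ‹_› ‹_› | exact hbyz ‹_› ‹_› ‹_›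
      | exact hbzx ‹_› ‹_› ‹_›

end IsCyclicTriangle

end ProjectivePlane

section BaseChange

variable (F K : Type*) [Field F] [Field K] [Algebra F K]

/-- `evalBaseChange F K Q`, packaged as a quadratic form over `K`. -/
def coordBaseChange (Q : QuadraticForm F (Fin 3 → F)) : QuadraticForm K (Fin 3 → K) :=
  (∑ i, algebraMap F K (Q (Pi.single i 1)) • QuadraticMap.proj i i) +
    ∑ i, ∑ j, if i < j then
      algebraMap F K (QuadraticMap.polar Q (Pi.single i 1) (Pi.single j 1)) •
        QuadraticMap.proj i j
    else 0

variable {F K}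

lemma coordBaseChange_apply (Q : QuadraticForm F (Fin 3 → F)) (v : Fin 3 → K) :
    coordBaseChange F K Q v = evalBaseChange F K Q v := by
  simp [coordBaseChange, evalBaseChange, _root_.sum_apply,
    apply_ite (fun Q : QuadraticForm K (Fin 3 → K) => Q v), Algebra.smul_def, pow_two, mul_comm]

lemma evalBaseChange_algebraMap_comp (Q : QuadraticForm F (Fin 3 → F)) (x : Fin 3 → F) :
    evalBaseChange F K Q (algebraMap F K ∘ x) = algebraMap F K (Q x) := by
  have hx : x = x 0 • Pi.single 0 1 + x 1 • Pi.single 1 1 + x 2 • Pi.single 2 1 := by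
    ext i
    fin_cases i <;> simp
  conv_rhs => rw [hx]
  rw [QuadraticMap.map_add Q, QuadraticMap.map_add Q, QuadraticMap.polar_add_left]
  simp only [QuadraticMap.map_smul, QuadraticMap.polar_smul_left, QuadraticMap.polar_smul_right]
  simp [evalBaseChange, Fin.sum_univ_three]
  ring

lemma evalBaseChange_algHom_comp (σ : K →ₐ[F] K) (Q : QuadraticForm F (Fin 3 → F))
    (v : Fin 3 → K) : evalBaseChange F K Q (σ ∘ v) = σ (evalBaseChange F K Q v) := by
  simp [evalBaseChange, map_sum, apply_ite]

lemma vanishesAt_mk_iff (Q : QuadraticForm F (Fin 3 → F)) {v : Fin 3 → K} (hv : v ≠ 0) :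
    VanishesAt F K Q (.mk K v hv) ↔ evalBaseChange F K Q v = 0 := by
  refine ⟨fun h => h v hv rfl, fun h w hw hvw => ?_⟩
  obtain ⟨c, rfl⟩ := (Projectivization.mk_eq_mk_iff' K w v hw hv).mp hvw.symm
  rw [← coordBaseChange_apply, QuadraticMap.map_smul, coordBaseChange_apply, h, smul_zero]

lemma mem_zeroLocus_iff (Q : QuadraticForm F (Fin 3 → F)) (x : ℙ K (Fin 3 → K)) :
    x ∈ zeroLocus F K Q ↔ coordBaseChange F K Q x.rep = 0 := by
  rw [coordBaseChange_apply, ← vanishesAt_mk_iff Q x.rep_nonzero, Projectivization.mk_rep]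
  rfl

lemma coordBaseChange_ne_zero {Q : QuadraticForm F (Fin 3 → F)} (hQ : Q ≠ 0) :
    coordBaseChange F K Q ≠ 0 := by
  obtain ⟨x, hx⟩ := DFunLike.ne_iff.mp hQ
  refine DFunLike.ne_iff.mpr ⟨algebraMap F K ∘ x, ?_⟩
  simpa [coordBaseChange_apply, evalBaseChange_algebraMap_comp] using hx

lemma exists_eq_smul_of_coordBaseChange_eq_smul {Q Q' : QuadraticForm F (Fin 3 → F)}
    (hQ : Q ≠ 0) {c : K} (hc : coordBaseChange F K Q' = c • coordBaseChange F K Q) :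
    ∃ d : F, Q' = d • Q := by
  have hcQ : ∀ x, algebraMap F K (Q' x) = c * algebraMap F K (Q x) := fun x => by
    simpa [coordBaseChange_apply, evalBaseChange_algebraMap_comp] using
      DFunLike.congr_fun hc (algebraMap F K ∘ x)
  obtain ⟨x, hx⟩ := DFunLike.ne_iff.mp hQ
  have hx' : algebraMap F K (Q x) ≠ 0 := by simpa using hx
  refine ⟨Q' x / Q x, QuadraticMap.ext fun y => (algebraMap F K).injective ?_⟩
  rw [_root_.smul_apply, smul_eq_mul, map_mul, map_div₀, hcQ, hcQ,
    mul_div_cancel_right₀ _ hx']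

variable (F) in
def quadraticMonomials : Fin 6 → QuadraticForm F (Fin 3 → F) :=
  ![.proj 0 0, .proj 1 1, .proj 2 2, .proj 0 1, .proj 0 2, .proj 1 2]

lemma linearIndependent_quadraticMonomials : LinearIndependent F (quadraticMonomials F) := by
  rw [Fintype.linearIndependent_iff]
  intro g hg
  have h := fun x => DFunLike.congr_fun hg x
  have h0 := h ![1, 0, 0]
  have h1 := h ![0, 1, 0]
  have h2 := h ![0, 0, 1]
  have h3 := h ![1, 1, 0]
  have h4 := h ![1, 0, 1]
  have h5 := h ![0, 1, 1]
  simp [quadraticMonomials, Fin.sum_univ_six] at h0 h1 h2 h3 h4 h5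
  intro i
  fin_cases i <;> simp_all

lemma exists_quadraticForm_ne_zero_apply_eq_zero (hK : finrank F K = 3) (a b : Fin 3 → F)
    (v : Fin 3 → K) :
    ∃ Q : QuadraticForm F (Fin 3 → F), Q ≠ 0 ∧ Q a = 0 ∧ Q b = 0 ∧
      evalBaseChange F K Q v = 0 := by
  have : FiniteDimensional F K := Module.finite_of_finrank_eq_succ hK
  let conditions : QuadraticForm F (Fin 3 → F) →ₗ[F] F × F × K :=
    { toFun Q := (Q a, Q b, evalBaseChange F K Q v)
      map_add' Q Q' := by
        simp [evalBaseChange, Fin.sum_univ_three, QuadraticMap.polar_add]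
        ring
      map_smul' c Q := by
        simp only [evalBaseChange, FunLike.coe_smul, QuadraticMap.polar_smul]
        simp [Fin.sum_univ_three, Algebra.smul_def]
        ring }
  let monomials := Fintype.linearCombination F (quadraticMonomials F)
  obtain ⟨c, hc, hc0⟩ := Submodule.exists_mem_ne_zero_of_ne_bot
    (LinearMap.ker_ne_bot_of_finrank_lt (f := conditions ∘ₗ monomials) (by simp [hK]))
  refine ⟨monomials c, fun h => hc0 ?_, by simpa [conditions, Prod.ext_iff] using hc⟩
  exact (linearIndependent_iff_injective_fintypeLinearCombination.mp
    linearIndependent_quadraticMonomials)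
    (h.trans (map_zero monomials).symm)

end BaseChange

section FiniteField

variable {F K : Type*} [Field F] [Field K] [Algebra F K] [Fintype F]

lemma finrank_eq_three_of_card_eq [Fintype K] (hK : Fintype.card K = Fintype.card F ^ 3) :
    finrank F K = 3 :=
  Nat.pow_right_injective Fintype.one_lt_card (Module.card_eq_pow_finrank.symm.trans hK)

lemma evalBaseChange_pow_card (Q : QuadraticForm F (Fin 3 → F)) (v : Fin 3 → K) :
    evalBaseChange F K Q (fun i => v i ^ Fintype.card F) =
      evalBaseChange F K Q v ^ Fintype.card F :=
  evalBaseChange_algHom_comp (FiniteField.frobeniusAlgHom F K) Q v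

lemma evalBaseChange_pow_card_sq (Q : QuadraticForm F (Fin 3 → F)) (v : Fin 3 → K) :
    evalBaseChange F K Q (fun i => v i ^ Fintype.card F ^ 2) =
      evalBaseChange F K Q v ^ Fintype.card F ^ 2 := by
  simp only [sq, pow_mul]
  rw [evalBaseChange_pow_card, evalBaseChange_pow_card]

lemma isCyclicTriangle_frobenius [Fintype K] (hK : Fintype.card K = Fintype.card F ^ 3)
    {v : Fin 3 → K} (hv : v ≠ 0) (hvq : (fun i => v i ^ Fintype.card F) ≠ 0)
    (hvq2 : (fun i => v i ^ Fintype.card F ^ 2) ≠ 0)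
    (hnc : ¬ Collinear3 K (.mk K v hv) (.mk K _ hvq) (.mk K _ hvq2)) :
    IsCyclicTriangle (FiniteField.frobeniusAlgHom F K : K →+* K) v
      (fun i => v i ^ Fintype.card F) (fun i => v i ^ Fintype.card F ^ 2) where
  map_fst := rfl
  map_snd := funext fun i => by simp [← pow_mul, sq]
  map_thd := funext fun i => by simp [← pow_mul, ← pow_succ, ← hK, FiniteField.pow_card]
  det_ne_zero h := by
    obtain ⟨f, hf, h1, h2, h3⟩ := exists_dual_ne_zero_of_det_eq_zero h
    exact hnc (collinear3_mk_of_dual hf hv hvq hvq2 h1 h2 h3)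

end FiniteField

lemma IsRationalPoint.exists_eq_mk {F K : Type*} [Field F] [Field K] [Algebra F K]
    {x : ℙ K (Fin 3 → K)} (hx : IsRationalPoint F K x) :
    ∃ (a : Fin 3 → F) (ha : algebraMap F K ∘ a ≠ 0), x = .mk K (algebraMap F K ∘ a) ha := by
  obtain ⟨w, hw, hw0, rfl⟩ := hx
  choose a ha using hw
  obtain rfl : algebraMap F K ∘ a = w := funext ha
  exact ⟨a, hw0, rfl⟩

/-- Let `P` be a point of `PG(2,q^3)` (with representative vector `v`) such that `P`, `P^q`
and `P^{q^2}` are not collinear. Then for any two distinct `F`-rational points `A` and `B`,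
there is a quadratic form `Q` on `F^3`, unique up to multiplication by a nonzero scalar of
`F`, whose base change to `K` vanishes on (all representative vectors of) each of the five
points `A, B, P, P^q, P^{q^2}`; moreover the zero locus in `PG(2,K)` of the base change of
`Q` contains no three collinear points (so the conic determined by `Q` is non-degenerate). -/
theorem unique_special_conic (q : ℕ) (F K : Type*) [Field F] [Field K]
    [Algebra F K] [Fintype F] [Fintype K]
    (hF : Fintype.card F = q) (hK : Fintype.card K = q ^ 3)
    (v : Fin 3 → K) (hv : v ≠ 0)
    (hvq : (fun i => v i ^ q) ≠ 0) (hvq2 : (fun i => v i ^ q ^ 2) ≠ 0)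
    (hnc : ¬ Collinear3 K (Projectivization.mk K v hv)
      (Projectivization.mk K (fun i => v i ^ q) hvq)
      (Projectivization.mk K (fun i => v i ^ q ^ 2) hvq2))
    (A B : ℙ K (Fin 3 → K)) (hA : IsRationalPoint F K A) (hB : IsRationalPoint F K B)
    (hAB : A ≠ B) :
    ∃ Q : QuadraticForm F (Fin 3 → F), Q ≠ 0 ∧
      (VanishesAt F K Q A ∧ VanishesAt F K Q B ∧
        VanishesAt F K Q (Projectivization.mk K v hv) ∧
        VanishesAt F K Q (Projectivization.mk K (fun i => v i ^ q) hvq) ∧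
        VanishesAt F K Q (Projectivization.mk K (fun i => v i ^ q ^ 2) hvq2)) ∧
      (∀ Q' : QuadraticForm F (Fin 3 → F), Q' ≠ 0 →
        VanishesAt F K Q' A → VanishesAt F K Q' B →
        VanishesAt F K Q' (Projectivization.mk K v hv) →
        VanishesAt F K Q' (Projectivization.mk K (fun i => v i ^ q) hvq) →
        VanishesAt F K Q' (Projectivization.mk K (fun i => v i ^ q ^ 2) hvq2) →
        ∃ c : F, c ≠ 0 ∧ Q' = c • Q) ∧
      (∀ x y z : ℙ K (Fin 3 → K), x ∈ zeroLocus F K Q → y ∈ zeroLocus F K Q →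
        z ∈ zeroLocus F K Q → x ≠ y → y ≠ z → x ≠ z → ¬ Collinear3 K x y z) := by
  subst hF
  obtain ⟨a, ha, rfl⟩ := hA.exists_eq_mk
  obtain ⟨b, hb, rfl⟩ := hB.exists_eq_mk
  have hfix : ∀ c : Fin 3 → F,
      (FiniteField.frobeniusAlgHom F K : K →+* K) ∘ (algebraMap F K ∘ c) = algebraMap F K ∘ c :=
    fun c => funext fun i => (FiniteField.frobeniusAlgHom F K).commutes (c i)
  have hp := (isCyclicTriangle_frobenius hK hv hvq hvq2 hnc).inGeneralPosition (hfix a) (hfix b)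
    ((Projectivization.independent_mk_iff_LinearIndependent ha hb).mp (by simpa using hAB))
  obtain ⟨Q, hQ0, hQa, hQb, hQv⟩ :=
    exists_quadraticForm_ne_zero_apply_eq_zero (finrank_eq_three_of_card_eq hK) a b v
  have hQK := coordBaseChange_ne_zero (K := K) hQ0
  have hQp : ∀ i, coordBaseChange F K Q (![algebraMap F K ∘ a, algebraMap F K ∘ b, v,
      fun i => v i ^ Fintype.card F, fun i => v i ^ Fintype.card F ^ 2] i) = 0 := by
    simp [Fin.forall_fin_succ, coordBaseChange_apply, evalBaseChange_algebraMap_comp,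
      evalBaseChange_pow_card, evalBaseChange_pow_card_sq, hQa, hQb, hQv]
  refine ⟨Q, hQ0, ?_, fun Q' hQ'0 h0 h1 h2 h3 h4 => ?_, fun x y z hx hy hz hxy hyz hxz hxyz => ?_⟩
  · simpa [Fin.forall_fin_succ, vanishesAt_mk_iff, coordBaseChange_apply] using hQp
  · obtain ⟨c, hc⟩ := QuadraticMap.exists_eq_smul_of_inGeneralPosition hp (by simp) hQK hQp
      (Q' := coordBaseChange F K Q')
      (by simp_all [Fin.forall_fin_succ, vanishesAt_mk_iff, coordBaseChange_apply])
    obtain ⟨d, rfl⟩ := exists_eq_smul_of_coordBaseChange_eq_smul hQ0 hc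
    exact ⟨d, by rintro rfl; simp at hQ'0, rfl⟩
  · rw [mem_zeroLocus_iff] at hx hy hz
    exact hQK (QuadraticMap.eq_zero_of_collinear3 hp (by simp) hQp hxyz hxy hxz hyz hx hy hz)
end
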